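/- arXiv:2603.28979 — 13 statements merged into one kernel-verified Lean document; each statement's English description precedes it below -/
import Mathlib

section
/- Let X be a symmetric n×n matrix whose entries all lie in {0, −1, 1}. Then X is positive semidefinite if and only if there exist an integer r ≥ 0 and vectors x_1, …, x_r, each with all entries in {0, −1, 1}, such that X = Σ_{i=1}^r x_i x_iᵀ. -/
/-!
Every 2 × 2 and 3 × 3 principal quadratic form of a PSD ternary matrix `X` is nonnegative. Testing
`-X i j • eᵢ + eⱼ` shows that a nonzero entry `X i j` forces `X i i = X j j = 1`, and testing
`X i j • eᵢ - eⱼ + X j k • eₖ` shows that `X i j, X j k ≠ 0` forces `X i k = X i j * X j k`.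
Hence `X i j ≠ 0` is an equivalence relation on `{i | X i i = 1}`, and `X` is the sum, over one
representative `i` per class, of `x xᵀ` with `x` the `i`-th row of `X`. Conversely every `x xᵀ` is
PSD.
-/

open Matrix

namespace Matrix

variable {ι : Type*} {X : Matrix ι ι ℝ}

lemma PosSemidef.apply_symm (hX : X.PosSemidef) (i j : ι) : X j i = X i j :=
  hX.isHermitian.apply i j

variable [Fintype ι]

lemma PosSemidef.quadForm_three_nonneg [DecidableEq ι] (hX : X.PosSemidef) (i j k : ι)
    (a b c : ℝ) :
    0 ≤ a ^ 2 * X i i + b ^ 2 * X j j + c ^ 2 * X k k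
      + 2 * a * b * X i j + 2 * a * c * X i k + 2 * b * c * X j k := by
  have hv := hX.dotProduct_mulVec_nonneg (Pi.single i a + Pi.single j b + Pi.single k c)
  simp only [star_trivial, mulVec_add, add_dotProduct, dotProduct_add, mulVec_single,
    single_dotProduct, col_apply, Pi.smul_apply, op_smul_eq_mul] at hv
  rw [hX.apply_symm i j, hX.apply_symm i k, hX.apply_symm j k] at hv
  linarith

lemma mul_self_eq_one_of_ternary {a : ℝ} (ha : a = 0 ∨ a = -1 ∨ a = 1) (h : a ≠ 0) :
    a * a = 1 := by
  rcases ha with rfl | rfl | rfl <;> norm_num at *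

section Ternary

variable (hX : X.PosSemidef) (ht : ∀ i j, X i j = 0 ∨ X i j = -1 ∨ X i j = 1)
include hX ht

lemma PosSemidef.diag_eq_one_of_ne_zero {i j : ι} (h : X i j ≠ 0) :
    X i i = 1 ∧ X j j = 1 := by
  classical
  have hq := hX.quadForm_three_nonneg i j j (-X i j) 1 0
  have hsq := mul_self_eq_one_of_ternary (ht i j) h
  have hii : X i i ≤ 1 := by rcases ht i i with h | h | h <;> linarith
  have hjj : X j j ≤ 1 := by rcases ht j j with h | h | h <;> linarith
  constructor <;> nlinarith

lemma PosSemidef.apply_eq_mul_of_ne_zero {i j k : ι} (hij : X i j ≠ 0) (hjk : X j k ≠ 0) :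
    X i k = X i j * X j k := by
  classical
  have hq := hX.quadForm_three_nonneg i j k (X i j) (-1) (X j k)
  rw [(hX.diag_eq_one_of_ne_zero ht hij).1, (hX.diag_eq_one_of_ne_zero ht hij).2,
    (hX.diag_eq_one_of_ne_zero ht hjk).2] at hq
  have hsq_ij := mul_self_eq_one_of_ternary (ht i j) hij
  have hsq_jk := mul_self_eq_one_of_ternary (ht j k) hjk
  have hpos : 1 ≤ 2 * (X i j * X j k) * X i k := by linarith
  have hp : (X i j * X j k) * (X i j * X j k) = 1 := by
    rw [mul_mul_mul_comm, hsq_ij, hsq_jk, one_mul]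
  rcases ht i k with h | h | h <;> rw [h] at hpos ⊢ <;> nlinarith

lemma PosSemidef.apply_mul_apply_of_ne_zero {i j k : ι} (hij : X i j ≠ 0) :
    X i j * X i k = X j k := by
  have hji : X j i ≠ 0 := by rwa [hX.apply_symm]
  by_cases hjk : X j k = 0
  · have hik : X i k = 0 := by
      by_contra hik
      exact mul_ne_zero hji hik (hjk ▸ hX.apply_eq_mul_of_ne_zero ht hji hik).symm
    rw [hik, hjk, mul_zero]
  · rw [hX.apply_eq_mul_of_ne_zero ht hij hjk, ← mul_assoc,
      mul_self_eq_one_of_ternary (ht i j) hij, one_mul]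

end Ternary

section Leaders

variable [LinearOrder ι]

/-- `i` is the least index of its block, the blocks being the classes of `X i j ≠ 0`. -/
def IsBlockLeader (X : Matrix ι ι ℝ) (i : ι) : Prop :=
  X i i = 1 ∧ ∀ m < i, X i m = 0

open scoped Classical in
noncomputable def blockLeaderRow (X : Matrix ι ι ℝ) (i : ι) : ι → ℝ :=
  if IsBlockLeader X i then X i else 0

variable (hX : X.PosSemidef) (ht : ∀ i j, X i j = 0 ∨ X i j = -1 ∨ X i j = 1)
include hX ht

lemma PosSemidef.exists_isBlockLeader {j : ι} (hj : X j j = 1) :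
    ∃ i, IsBlockLeader X i ∧ X i j ≠ 0 := by
  classical
  obtain ⟨i, hi, hmin⟩ := (Finset.univ.filter fun i => X i j ≠ 0).exists_min_image id
    ⟨j, by simp [hj]⟩
  simp only [Finset.mem_filter, Finset.mem_univ, true_and, id] at hi hmin
  refine ⟨i, ⟨(hX.diag_eq_one_of_ne_zero ht hi).1, fun m hm => ?_⟩, hi⟩
  by_contra hne
  have hmi : X m i ≠ 0 := by rwa [hX.apply_symm]
  have hmj : X m j ≠ 0 := by
    rw [hX.apply_eq_mul_of_ne_zero ht hmi hi]
    exact mul_ne_zero hmi hi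
  exact (hmin m hmj).not_gt hm

lemma PosSemidef.isBlockLeader_unique {i i' j : ι} (hi : IsBlockLeader X i)
    (hi' : IsBlockLeader X i') (hij : X i j ≠ 0) (hi'j : X i' j ≠ 0) : i = i' := by
  have hji' : X j i' ≠ 0 := by rwa [hX.apply_symm]
  have hii' : X i i' ≠ 0 := by
    rw [hX.apply_eq_mul_of_ne_zero ht hij hji']
    exact mul_ne_zero hij hji'
  rcases lt_trichotomy i i' with h | h | h
  · exact absurd (hi'.2 i h) (by rwa [hX.apply_symm])
  · exact h
  · exact absurd (hi.2 i' h) hii'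

lemma PosSemidef.eq_sum_vecMulVec_blockLeaderRow :
    X = ∑ i, vecMulVec (blockLeaderRow X i) (blockLeaderRow X i) := by
  ext j k
  simp only [sum_apply, vecMulVec_apply]
  by_cases hj : X j j = 1
  · obtain ⟨i₀, hi₀, hi₀j⟩ := hX.exists_isBlockLeader ht hj
    rw [Finset.sum_eq_single i₀ ?_ (by simp), blockLeaderRow, if_pos hi₀,
      hX.apply_mul_apply_of_ne_zero ht hi₀j]
    intro i _ hne
    by_cases hi : IsBlockLeader X i
    · have hij : X i j = 0 := by
        by_contra hij
        exact hne (hX.isBlockLeader_unique ht hi hi₀ hij hi₀j)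
      simp [blockLeaderRow, hi, hij]
    · simp [blockLeaderRow, hi]
  · have hcol : ∀ i, X i j = 0 := fun i => by
      by_contra h
      exact hj (hX.diag_eq_one_of_ne_zero ht h).2
    have hjk : X j k = 0 := by
      by_contra h
      exact hj (hX.diag_eq_one_of_ne_zero ht h).1
    rw [hjk]
    refine (Finset.sum_eq_zero fun i _ => ?_).symm
    by_cases hi : IsBlockLeader X i <;> simp [blockLeaderRow, hi, hcol]

end Leaders

end Matrix

theorem stmt_0_general (n : ℕ) (X : Matrix (Fin n) (Fin n) ℝ)
    (hternary : ∀ i j, X i j = 0 ∨ X i j = -1 ∨ X i j = 1) :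
    X.PosSemidef ↔
      ∃ (r : ℕ) (x : Fin r → Fin n → ℝ),
        (∀ i k, x i k = 0 ∨ x i k = -1 ∨ x i k = 1) ∧
        X = ∑ i, vecMulVec (x i) (x i) := by
  constructor
  · intro hX
    refine ⟨n, blockLeaderRow X, fun i k => ?_, hX.eq_sum_vecMulVec_blockLeaderRow hternary⟩
    unfold blockLeaderRow
    split_ifs
    exacts [hternary i k, Or.inl rfl]
  · rintro ⟨r, x, -, rfl⟩
    exact posSemidef_sum _ fun i _ => by simpa using posSemidef_vecMulVec_self_star (x i)

theorem stmt_0 (n : ℕ) (X : Matrix (Fin n) (Fin n) ℝ)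
    (hsymm : X.IsSymm)
    (hternary : ∀ i j, X i j = 0 ∨ X i j = -1 ∨ X i j = 1) :
    X.PosSemidef ↔
      ∃ (r : ℕ) (x : Fin r → Fin n → ℝ),
        (∀ i k, x i k = 0 ∨ x i k = -1 ∨ x i k = 1) ∧
        X = ∑ i, vecMulVec (x i) (x i) :=
  stmt_0_general n X hternary
end

section
/- A symmetric n×n matrix with all entries in {0, −1, 1} is positive semidefinite if and only if it equals T Tᵀ for some n×n matrix T whose entries all lie in {0, −1, 1}. -/
/-!
For a positive semidefinite X, a vanishing diagonal entry kills its row, and the equality case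
X_ij² = X_ii X_jj of Cauchy–Schwarz forces X_jj · (row i) = X_ij · (row j). For a ternary X this
means: the diagonal lies in {0, 1}, and whenever X_ij ≠ 0 we have X_ij = ±1 and
row i = X_ij · row j. So X_ik = X_ij X_jk as soon as X_ij ≠ 0, which is exactly what is needed for
X = T Tᵀ, where T keeps only the first nonzero entry of each row of X.
-/

open Matrix
open scoped ComplexOrder

namespace Matrix

variable {ι : Type*}

theorem PosSemidef.isSymm {R : Type*} [Ring R] [PartialOrder R] [StarRing R] [TrivialStar R]
    {X : Matrix ι ι R} (hX : X.PosSemidef) : X.IsSymm :=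
  isHermitian_iff_isSymm.mp hX.isHermitian

section LeadingEntries

variable {R : Type*} [CommSemiring R] [LinearOrder ι]

open Classical in
noncomputable def leadingEntries (X : Matrix ι ι R) : Matrix ι ι R :=
  of fun i j => if ∀ l < j, X i l = 0 then X i j else 0

theorem leadingEntries_apply_eq_zero_or_eq (X : Matrix ι ι R) (i j : ι) :
    X.leadingEntries i j = 0 ∨ X.leadingEntries i j = X i j := by
  simp only [leadingEntries, of_apply]
  split_ifs <;> simp

theorem eq_leadingEntries_mul_transpose [Fintype ι] [NoZeroDivisors R] {X : Matrix ι ι R}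
    (hX : X.IsSymm) (hmul : ∀ i j k, X i j ≠ 0 → X i k = X i j * X j k) :
    X = X.leadingEntries * X.leadingEntriesᵀ := by
  ext i k
  simp only [mul_apply, transpose_apply, leadingEntries, of_apply]
  by_cases hrow : ∀ j, X i j = 0
  · simp [hrow]
  push Not at hrow
  obtain ⟨l, hil, hmin⟩ : ∃ l, X i l ≠ 0 ∧ ∀ m < l, X i m = 0 := by
    obtain ⟨l, hil, hmin⟩ := wellFounded_lt.has_min {j | X i j ≠ 0} hrow
    exact ⟨l, hil, fun m hml => by_contra fun him => hmin m him hml⟩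
  rw [Finset.sum_eq_single l, if_pos hmin]
  · split_ifs with hk
    · by_cases hkl : X k l = 0
      · rw [hkl, mul_zero]
        by_contra hik
        have hki : X k i ≠ 0 := by rwa [hX.apply i k]
        exact mul_ne_zero hki hil ((hmul k i l hki).symm.trans hkl)
      · rw [hmul i l k hil, hX.apply k l]
    · push Not at hk
      obtain ⟨m, hml, hkm⟩ := hk
      rw [mul_zero]
      by_contra hik
      exact mul_ne_zero hik hkm ((hmul i k m hik).symm.trans (hmin m hml))
  · intro j _ hjl
    rcases hjl.lt_or_gt with hjl | hlj
    · rw [hmin j hjl, ite_self, zero_mul]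
    · rw [if_neg fun h => hil (h l hlj), zero_mul]
  · exact fun h => absurd (Finset.mem_univ l) h

end LeadingEntries

variable [Fintype ι]

theorem PosSemidef.apply_eq_zero_of_diag_eq_zero {𝕜 : Type*} [RCLike 𝕜] {X : Matrix ι ι 𝕜}
    (hX : X.PosSemidef) {j : ι} (h : X j j = 0) (i : ι) : X i j = 0 := by
  classical
  have hv : X *ᵥ Pi.single j 1 = 0 :=
    (hX.dotProduct_mulVec_zero_iff _).mp (by simp [h])
  simpa [mulVec_single_one] using congrFun hv i

theorem PosSemidef.diag_mul_apply_eq {X : Matrix ι ι ℝ} (hX : X.PosSemidef) {i j : ι}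
    (h : X i j ^ 2 = X i i * X j j) (k : ι) : X j j * X i k = X i j * X j k := by
  classical
  -- vᵀ X v = X_jj (X_ii X_jj - X_ij²) = 0, so v lies in the kernel of X
  set v : ι → ℝ := X j j • Pi.single i 1 - X i j • Pi.single j 1
  have hv : X *ᵥ v = 0 := by
    refine (hX.dotProduct_mulVec_zero_iff v).mp ?_
    simp only [v, star_trivial, mulVec_sub, mulVec_smul, mulVec_single, MulOpposite.op_one,
      one_smul, dotProduct_sub, dotProduct_smul, sub_dotProduct, smul_dotProduct,
      single_dotProduct, col_apply, one_mul, smul_eq_mul, hX.isSymm.apply i j]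
    linear_combination -X j j * h
  have hk := congrFun hv k
  simp only [v, mulVec_sub, mulVec_smul, mulVec_single, MulOpposite.op_one, one_smul,
    Pi.sub_apply, Pi.smul_apply, col_apply, smul_eq_mul, Pi.zero_apply] at hk
  rw [hX.isSymm.apply i k, hX.isSymm.apply j k] at hk
  linarith

theorem PosSemidef.apply_eq_mul_of_ternary {X : Matrix ι ι ℝ} (hX : X.PosSemidef)
    (hternary : ∀ i j, X i j = 0 ∨ X i j = -1 ∨ X i j = 1) {i j : ι} (hij : X i j ≠ 0) (k : ι) :
    X i k = X i j * X j k := by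
  have hdiag : ∀ l, X l l ≠ 0 → X l l = 1 := fun l hl => by
    rcases hternary l l with h | h | h
    · exact absurd h hl
    · linarith [hX.diag_nonneg (i := l)]
    · exact h
  have hii : X i i = 1 :=
    hdiag i fun h => hij (hX.isSymm.apply i j ▸ hX.apply_eq_zero_of_diag_eq_zero h j)
  have hjj : X j j = 1 := hdiag j fun h => hij (hX.apply_eq_zero_of_diag_eq_zero h i)
  have hsq : X i j ^ 2 = X i i * X j j := by
    rcases hternary i j with h | h | h <;> simp_all
  simpa [hjj] using hX.diag_mul_apply_eq hsq k

end Matrix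

theorem stmt_1_general (n : ℕ) (X : Matrix (Fin n) (Fin n) ℝ)
    (hternary : ∀ i j, X i j = 0 ∨ X i j = -1 ∨ X i j = 1) :
    X.PosSemidef ↔
      ∃ T : Matrix (Fin n) (Fin n) ℝ,
        (∀ i j, T i j = 0 ∨ T i j = -1 ∨ T i j = 1) ∧ X = T * Tᵀ := by
  constructor
  · intro hX
    refine ⟨X.leadingEntries, fun i j => ?_, eq_leadingEntries_mul_transpose hX.isSymm
      fun i j k hij => hX.apply_eq_mul_of_ternary hternary hij k⟩
    rcases X.leadingEntries_apply_eq_zero_or_eq i j with h | h <;> rw [h]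
    exacts [Or.inl rfl, hternary i j]
  · rintro ⟨T, -, rfl⟩
    simpa using posSemidef_self_mul_conjTranspose T

theorem stmt_1 (n : ℕ) (X : Matrix (Fin n) (Fin n) ℝ)
    (hsymm : X.IsSymm)
    (hternary : ∀ i j, X i j = 0 ∨ X i j = -1 ∨ X i j = 1) :
    X.PosSemidef ↔
      ∃ T : Matrix (Fin n) (Fin n) ℝ,
        (∀ i j, T i j = 0 ∨ T i j = -1 ∨ T i j = 1) ∧ X = T * Tᵀ :=
  stmt_1_general n X hternary
end

section
/- Let x ∈ ℝⁿ and let X be a real symmetric n×n matrix with diag(X) = |x| (that is, X_ii = |x_i| for all i). Let Y be the (n+1)×(n+1) bordered matrix with Y_00 = 1, first row and column equal to xᵀ and x, and lower-right block X. Then Y has all entries in {0, −1, 1} and is positive semidefinite if and only if X = x xᵀ. -/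
/-!
Since the corner entry of `Y` is `1`, the Schur complement criterion says that `Y` is positive
semidefinite exactly when `X - x xᵀ` is. A real number `t` lies in `{0, -1, 1}` iff `t² = |t|`,
so in either direction the hypothesis `diag X = |x|` makes the diagonal of `X - x xᵀ` vanish, and a
positive semidefinite matrix with zero diagonal is zero.
-/

open Matrix

open scoped ComplexOrder

theorem mul_self_eq_abs_iff {α : Type*} [Ring α] [LinearOrder α] [IsStrictOrderedRing α] {t : α} :
    t * t = |t| ↔ t = 0 ∨ t = -1 ∨ t = 1 := by
  rw [← abs_mul_abs_self, ← isIdempotentElem_iff, IsIdempotentElem.iff_eq_zero_or_one, abs_eq_zero,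
    abs_eq zero_le_one, or_comm (a := t = 1)]

theorem Matrix.PosSemidef.eq_zero_of_diag_eq_zero {n 𝕜 : Type*} [Fintype n] [RCLike 𝕜]
    {A : Matrix n n 𝕜} (hA : A.PosSemidef) (h : ∀ i, A i i = 0) : A = 0 :=
  hA.trace_eq_zero_iff.mp (by simp [trace, h])

theorem posSemidef_fromBlocks_one_iff {m : Type*} [Fintype m] (x : m → ℝ) (X : Matrix m m ℝ) :
    (fromBlocks (of fun _ _ => (1 : ℝ)) (of fun (_ : Fin 1) j => x j) (of fun i _ => x i)
      X).PosSemidef ↔ (X - vecMulVec x x).PosSemidef := by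
  have hcorner : (of fun _ _ => (1 : ℝ) : Matrix (Fin 1) (Fin 1) ℝ) = 1 := by
    ext i j
    fin_cases i
    fin_cases j
    rfl
  have hcol : (of fun i _ => x i : Matrix m (Fin 1) ℝ) = (of fun (_ : Fin 1) j => x j)ᴴ := by
    ext
    simp
  let _ : Invertible (1 : Matrix (Fin 1) (Fin 1) ℝ) := invertibleOne
  rw [hcol, hcorner, PosDef.fromBlocks₁₁ _ _ PosDef.one, inv_one, Matrix.mul_one]
  congr! 2
  ext i j
  simp [vecMulVec_apply, Matrix.mul_apply]

theorem stmt_2_general (n : ℕ) (x : Fin n → ℝ) (X : Matrix (Fin n) (Fin n) ℝ)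
    (hdiag : ∀ i, X i i = |x i|)
    (Y : Matrix (Fin 1 ⊕ Fin n) (Fin 1 ⊕ Fin n) ℝ)
    (hY : Y = Matrix.fromBlocks (Matrix.of fun _ _ => (1 : ℝ))
      (Matrix.of fun _ j => x j) (Matrix.of fun i _ => x i) X) :
    ((∀ i j, Y i j = 0 ∨ Y i j = -1 ∨ Y i j = 1) ∧ Y.PosSemidef) ↔
      X = vecMulVec x x := by
  subst hY
  rw [posSemidef_fromBlocks_one_iff]
  constructor
  · rintro ⟨hY, hpsd⟩
    have hx : ∀ i, x i * x i = |x i| := fun i =>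
      mul_self_eq_abs_iff.mpr (by simpa using hY (Sum.inl 0) (Sum.inr i))
    exact sub_eq_zero.mp <|
      hpsd.eq_zero_of_diag_eq_zero fun i => by simp [hdiag, vecMulVec_apply, hx]
  · rintro rfl
    have hx : ∀ i, x i = 0 ∨ x i = -1 ∨ x i = 1 := fun i =>
      mul_self_eq_abs_iff.mp (by simpa [vecMulVec_apply] using hdiag i)
    refine ⟨?_, by simpa using PosSemidef.zero⟩
    rintro (i | i) (j | j)
    · simp
    · simpa using hx j
    · simpa using hx i
    · rcases hx i with h | h | h <;> rcases hx j with h' | h' | h' <;> simp [vecMulVec_apply, h, h']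

theorem stmt_2 (n : ℕ) (x : Fin n → ℝ) (X : Matrix (Fin n) (Fin n) ℝ)
    (hsymm : X.IsSymm) (hdiag : ∀ i, X i i = |x i|)
    (Y : Matrix (Fin 1 ⊕ Fin n) (Fin 1 ⊕ Fin n) ℝ)
    (hY : Y = Matrix.fromBlocks (Matrix.of fun _ _ => (1 : ℝ))
      (Matrix.of fun _ j => x j) (Matrix.of fun i _ => x i) X) :
    ((∀ i j, Y i j = 0 ∨ Y i j = -1 ∨ Y i j = 1) ∧ Y.PosSemidef) ↔
      X = vecMulVec x x :=
  stmt_2_general n x X hdiag Y hY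
end

section
/- Let n ≥ 3 and let X be a symmetric n×n matrix whose entries all lie in {0, −1, 1}. Then X is positive semidefinite if and only if X satisfies: (i) the triangle inequalities X_ij + X_ik + X_jk ≥ −1, −X_ij + X_ik − X_jk ≥ −1, X_ij − X_ik − X_jk ≥ −1, and −X_ij − X_ik + X_jk ≥ −1 for all 1 ≤ i < j < k ≤ n, and (ii) the pair inequalities X_ij ≤ X_ii and X_ij ≥ −X_ii for all i ≠ j. -/
/-!
Necessity: evaluating the quadratic form at `(1, ±1, ±1)` on three coordinates, and using that
the diagonal entries are at most `1`, shows that each signed sum in (i) is at least `-3/2`, hence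
at least `-1` since it is an integer; (ii) comes from `(±1, 1)` on two coordinates.

Sufficiency: (ii) forces `X_ii = 1` on every nonzero row, and then (i) forces
`X_jk = X_rj X_rk` whenever `X_rj, X_rk ≠ 0`. Altogether `X_rj X_rk = X_rj² X_jk` for all
`r, j, k`, so with `c_j = ∑_r X_rj²` we get `c_j X_jk = ∑_r X_rj X_rk` and `c_j = c_k` whenever
`X_jk ≠ 0`. Hence `X` is the Gram matrix of the columns `X_{·j} / √c_j`.
-/

open Matrix

def Ternary (x : ℝ) : Prop := x = 0 ∨ x = -1 ∨ x = 1

namespace Ternary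

variable {a b c : ℝ}

theorem neg (ha : Ternary a) : Ternary (-a) := by
  rcases ha with rfl | rfl | rfl <;> norm_num [Ternary]

theorem le_one (ha : Ternary a) : a ≤ 1 := by
  rcases ha with rfl | rfl | rfl <;> norm_num

theorem sq_eq_one (ha : Ternary a) (h : a ≠ 0) : a ^ 2 = 1 := by
  rcases ha with rfl | rfl | rfl <;> norm_num at *

theorem neg_one_le_add_of_neg_three_le (ha : Ternary a) (hb : Ternary b) (hc : Ternary c)
    (h : -3 ≤ 2 * (a + b + c)) : -1 ≤ a + b + c := by
  rcases ha with rfl | rfl | rfl <;> rcases hb with rfl | rfl | rfl <;>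
    rcases hc with rfl | rfl | rfl <;> linarith

end Ternary

def TriangleIneqs {ι : Type*} (X : Matrix ι ι ℝ) (i j k : ι) : Prop :=
  -1 ≤ X i j + X i k + X j k ∧ -1 ≤ -X i j + X i k - X j k ∧
    -1 ≤ X i j - X i k - X j k ∧ -1 ≤ -X i j - X i k + X j k

theorem forall_of_forall_lt_of_lt {ι : Type*} [LinearOrder ι] {P : ι → ι → ι → Prop}
    (swap₁₂ : ∀ i j k, P i j k → P j i k) (swap₂₃ : ∀ i j k, P i j k → P i k j)
    (h : ∀ i j k, i < j → j < k → P i j k) {i j k : ι}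
    (hij : i ≠ j) (hik : i ≠ k) (hjk : j ≠ k) : P i j k := by
  rcases hij.lt_or_gt with hij | hij <;> rcases hik.lt_or_gt with hik | hik <;>
    rcases hjk.lt_or_gt with hjk | hjk
  · exact h i j k hij hjk
  · exact swap₂₃ _ _ _ (h i k j hik hjk)
  · exact absurd (hij.trans hjk) hik.not_gt
  · exact swap₂₃ _ _ _ (swap₁₂ _ _ _ (h k i j hik hij))
  · exact swap₁₂ _ _ _ (h j i k hij hik)
  · exact absurd (hij.trans hik) hjk.not_gt
  · exact swap₁₂ _ _ _ (swap₂₃ _ _ _ (h j k i hjk hik))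
  · exact swap₁₂ _ _ _ (swap₂₃ _ _ _ (swap₁₂ _ _ _ (h k j i hjk hij)))

namespace TriangleIneqs

variable {ι : Type*} {X : Matrix ι ι ℝ} {i j k : ι}

theorem swap₁₂ (hX : X.IsSymm) (h : TriangleIneqs X i j k) : TriangleIneqs X j i k := by
  obtain ⟨h₁, h₂, h₃, h₄⟩ := h
  rw [TriangleIneqs, hX.apply i j]
  exact ⟨by linarith, by linarith, by linarith, by linarith⟩

theorem swap₂₃ (hX : X.IsSymm) (h : TriangleIneqs X i j k) : TriangleIneqs X i k j := by
  obtain ⟨h₁, h₂, h₃, h₄⟩ := h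
  rw [TriangleIneqs, hX.apply j k]
  exact ⟨by linarith, by linarith, by linarith, by linarith⟩

theorem mul_eq_sq_mul (h : TriangleIneqs X i j k) (hij : Ternary (X i j))
    (hik : Ternary (X i k)) (hjk : Ternary (X j k)) :
    X i j * X i k = X i j ^ 2 * X j k := by
  obtain ⟨h₁, h₂, h₃, h₄⟩ := h
  rcases hij with h | h | h <;> rcases hik with h' | h' | h' <;>
    rcases hjk with h'' | h'' | h'' <;> simp only [h, h', h''] at h₁ h₂ h₃ h₄ ⊢ <;> linarith

end TriangleIneqs

section PosSemidef

variable {ι : Type*} {X : Matrix ι ι ℝ}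

theorem Matrix.PosSemidef.quadForm_three_nonneg_s3 (hX : X.PosSemidef) (i j k : ι) (a b c : ℝ) :
    0 ≤ a ^ 2 * X i i + b ^ 2 * X j j + c ^ 2 * X k k
      + 2 * (a * b * X i j + a * c * X i k + b * c * X j k) := by
  have hsymm (p q : ι) : X q p = X p q := by simpa using hX.isHermitian.apply p q
  have := (hX.submatrix ![i, j, k]).dotProduct_mulVec_nonneg ![a, b, c]
  simp only [star_trivial, dotProduct, mulVec, Fin.sum_univ_three, submatrix_apply,
    cons_val_zero, cons_val_one, cons_val] at this
  rw [hsymm i j, hsymm i k, hsymm j k] at this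
  linarith

theorem Matrix.PosSemidef.triangleIneqs (hX : X.PosSemidef) (hX3 : ∀ i j, Ternary (X i j))
    (i j k : ι) : TriangleIneqs X i j k := by
  have hq (b c : ℝ) := hX.quadForm_three_nonneg_s3 i j k 1 b c
  have hdiag := add_le_add_three (hX3 i i).le_one (hX3 j j).le_one (hX3 k k).le_one
  refine ⟨?_, ?_, ?_, ?_⟩
  · exact (hX3 i j).neg_one_le_add_of_neg_three_le (hX3 i k) (hX3 j k)
      (by linarith [hq 1 1])
  · linarith [(hX3 i j).neg.neg_one_le_add_of_neg_three_le (hX3 i k) (hX3 j k).neg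
      (by linarith [hq (-1) 1])]
  · linarith [(hX3 i j).neg_one_le_add_of_neg_three_le (hX3 i k).neg (hX3 j k).neg
      (by linarith [hq 1 (-1)])]
  · linarith [(hX3 i j).neg.neg_one_le_add_of_neg_three_le (hX3 i k).neg (hX3 j k)
      (by linarith [hq (-1) (-1)])]

theorem Matrix.PosSemidef.abs_le_diag (hX : X.PosSemidef) (hX3 : ∀ i j, Ternary (X i j))
    (i j : ι) : X i j ≤ X i i ∧ -X i i ≤ X i j := by
  have hq (a : ℝ) := hX.quadForm_three_nonneg_s3 i j j a 1 0
  have hii : 0 ≤ X i i := hX.diag_nonneg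
  have hjj := (hX3 j j).le_one
  rcases hX3 i i with h | h | h <;> rcases hX3 i j with h' | h' | h' <;>
    constructor <;> linarith [hq 1, hq (-1)]

end PosSemidef

section Gram

variable {ι : Type*} {X : Matrix ι ι ℝ}

theorem diag_eq_one_of_apply_ne_zero [Nontrivial ι] (hX3 : ∀ i j, Ternary (X i j))
    (hpair : ∀ i j, i ≠ j → X i j ≤ X i i ∧ -X i i ≤ X i j) {i j : ι} (h : X i j ≠ 0) :
    X i i = 1 := by
  obtain ⟨l, hl⟩ := exists_ne i
  have hii : 0 ≤ X i i := by linarith [hpair i l hl.symm]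
  rcases hX3 i i with h0 | h0 | h0
  · obtain rfl | hij := eq_or_ne i j
    · exact absurd h0 h
    · have := hpair i j hij
      exact absurd (by linarith) h
  · linarith
  · exact h0

theorem mul_eq_sq_mul_of_triangleIneqs (hX : X.IsSymm) (hX3 : ∀ i j, Ternary (X i j))
    (hdiag : ∀ i j, X i j ≠ 0 → X i i = 1)
    (htri : ∀ i j k, i ≠ j → i ≠ k → j ≠ k → TriangleIneqs X i j k) (r j k : ι) :
    X r j * X r k = X r j ^ 2 * X j k := by
  by_cases hrj : X r j = 0
  · simp [hrj]
  have hsq : X r j ^ 2 = 1 := (hX3 r j).sq_eq_one hrj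
  have hjj : X j j = 1 := hdiag j r (by rwa [hX.apply r j])
  rw [hsq, one_mul]
  obtain rfl | hrj' := eq_or_ne r j
  · rw [hjj, one_mul]
  obtain rfl | hrk := eq_or_ne r k
  · rw [hdiag r j hrj, mul_one, hX.apply]
  obtain rfl | hjk := eq_or_ne j k
  · rw [hjj, ← sq, hsq]
  simpa [hsq] using (htri r j k hrj' hrk hjk).mul_eq_sq_mul (hX3 r j) (hX3 r k) (hX3 j k)

theorem posSemidef_of_mul_eq_sq_mul [Fintype ι] (hX : X.IsSymm)
    (h : ∀ r j k, X r j * X r k = X r j ^ 2 * X j k) : X.PosSemidef := by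
  set c : ι → ℝ := fun j => ∑ r, X r j ^ 2
  have hc (j k : ι) : c j * X j k = ∑ r, X r j * X r k := by simp [c, Finset.sum_mul, h]
  have hc_eq (j k : ι) (hjk : X j k ≠ 0) : c j = c k := by
    refine mul_right_cancel₀ hjk ?_
    rw [hc, ← hX.apply j k, hc]
    simp_rw [mul_comm]
  have hc_pos (j k : ι) (hjk : X j k ≠ 0) : 0 < c k := by
    calc 0 < X j k ^ 2 := by positivity
      _ ≤ c k := Finset.single_le_sum (fun r _ => sq_nonneg (X r k)) (Finset.mem_univ j)
  suffices X = (of fun r j => X r j / √(c j))ᴴ * of fun r j => X r j / √(c j) by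
    rw [this]; exact posSemidef_conjTranspose_mul_self _
  ext j k
  simp only [mul_apply, conjTranspose_apply, of_apply, star_trivial, div_mul_div_comm,
    ← Finset.sum_div, ← hc]
  by_cases hjk : X j k = 0
  · simp [hjk]
  have hck := hc_pos j k hjk
  rw [hc_eq j k hjk, Real.mul_self_sqrt hck.le, mul_div_cancel_left₀ _ hck.ne']

end Gram

theorem stmt_3 (n : ℕ) (hn : 3 ≤ n) (X : Matrix (Fin n) (Fin n) ℝ)
    (hsymm : X.IsSymm)
    (hternary : ∀ i j, X i j = 0 ∨ X i j = -1 ∨ X i j = 1) :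
    X.PosSemidef ↔
      ((∀ i j k : Fin n, i < j → j < k →
          -1 ≤ X i j + X i k + X j k ∧
          -1 ≤ -X i j + X i k - X j k ∧
          -1 ≤ X i j - X i k - X j k ∧
          -1 ≤ -X i j - X i k + X j k) ∧
       (∀ i j : Fin n, i ≠ j → X i j ≤ X i i ∧ -X i i ≤ X i j)) := by
  refine ⟨fun hX => ⟨fun i j k _ _ => hX.triangleIneqs hternary i j k,
    fun i j _ => hX.abs_le_diag hternary i j⟩, fun ⟨htri, hpair⟩ => ?_⟩
  have : Nontrivial (Fin n) := Fin.nontrivial_iff_two_le.mpr (by omega)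
  have hdiag (i j : Fin n) : X i j ≠ 0 → X i i = 1 := diag_eq_one_of_apply_ne_zero hternary hpair
  have htri' (i j k : Fin n) : i ≠ j → i ≠ k → j ≠ k → TriangleIneqs X i j k :=
    forall_of_forall_lt_of_lt (P := TriangleIneqs X) (fun _ _ _ => .swap₁₂ hsymm)
      (fun _ _ _ => .swap₂₃ hsymm) htri
  exact posSemidef_of_mul_eq_sq_mul hsymm
    (mul_eq_sq_mul_of_triangleIneqs hsymm hternary hdiag htri')
end

section
/- Let x₁, x₂ ∈ {0, −1, 1}ⁿ have disjoint supports, and set S_i = {j : (x_i)_j = 1} and T_i = {j : (x_i)_j = −1} for i ∈ {1, 2}. Let u = 𝟙_{S₁∪S₂} − 𝟙_{T₁∪T₂} and v = 𝟙_{S₁∪T₂} − 𝟙_{S₂∪T₁}. Then u and v have all entries in {0, −1, 1} and x₁x₁ᵀ + x₂x₂ᵀ = (1/2) u uᵀ + (1/2) v vᵀ; in particular, every ternary PSD matrix of rank 2 is a convex combination of two rank-one ternary PSD matrices. -/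
/-!
For disjointly supported ternary `x, y` the vectors `x ± y` are ternary and
`x xᵀ + y yᵀ = ½ (x + y)(x + y)ᵀ + ½ (x - y)(x - y)ᵀ`; the vectors `u, v` of the statement are
exactly `x₁ + x₂` and `x₁ - x₂`.

For the converse, a nonzero entry `X i j` of a ternary PSD matrix forces `X i i = X j j = 1`, so
the vector `X i j • eᵢ - eⱼ` is isotropic, hence in the kernel, and row `j` is `X i j` times row
`i`. Taking a maximal set `s` of indices on which `X` restricts to the identity, every nonzero
row is `±` a row indexed by `s`, so `X = ∑_{i ∈ s} Xᵢ Xᵢᵀ` with disjointly supported ternary rows,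
and `|s| = rank X`. For rank two this gives `X = y₁ y₁ᵀ + y₂ y₂ᵀ`, and the first part applies.
-/

open Matrix

def IsTernary (a : ℝ) : Prop := a = 0 ∨ a = -1 ∨ a = 1

namespace IsTernary

variable {a b : ℝ}

lemma neg (ha : IsTernary a) : IsTernary (-a) := by
  rcases ha with rfl | rfl | rfl <;> norm_num [IsTernary]

lemma add (ha : IsTernary a) (hb : IsTernary b) (hab : a = 0 ∨ b = 0) : IsTernary (a + b) := by
  rcases hab with rfl | rfl <;> simpa

lemma sub (ha : IsTernary a) (hb : IsTernary b) (hab : a = 0 ∨ b = 0) : IsTernary (a - b) := by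
  simpa [sub_eq_add_neg] using ha.add hb.neg (by simpa using hab)

lemma eq_zero_or_eq_one_of_nonneg (ha : IsTernary a) (h : 0 ≤ a) : a = 0 ∨ a = 1 := by
  rcases ha with ha | ha | ha
  · exact .inl ha
  · linarith
  · exact .inr ha

lemma mul_self_eq_one (ha : IsTernary a) (h : a ≠ 0) : a * a = 1 := by
  rcases ha with rfl | rfl | rfl
  · exact absurd rfl h
  all_goals norm_num

end IsTernary

lemma ite_or_sub_ite_or_eq_add {a b : ℝ} (ha : IsTernary a) (hb : IsTernary b)
    (hab : a = 0 ∨ b = 0) :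
    ((if a = 1 ∨ b = 1 then 1 else 0) - if a = -1 ∨ b = -1 then 1 else 0) = a + b := by
  rcases hab with rfl | rfl
  · rcases hb with rfl | rfl | rfl <;> norm_num
  · rcases ha with rfl | rfl | rfl <;> norm_num

lemma ite_or_sub_ite_or_eq_sub {a b : ℝ} (ha : IsTernary a) (hb : IsTernary b)
    (hab : a = 0 ∨ b = 0) :
    ((if a = 1 ∨ b = -1 then 1 else 0) - if b = 1 ∨ a = -1 then 1 else 0) = a - b := by
  rcases hab with rfl | rfl
  · rcases hb with rfl | rfl | rfl <;> norm_num
  · rcases ha with rfl | rfl | rfl <;> norm_num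

theorem Matrix.vecMulVec_add_vecMulVec_eq_half_smul {K ι : Type*} [Field K] [NeZero (2 : K)]
    (x y : ι → K) :
    vecMulVec x x + vecMulVec y y =
      (1 / 2 : K) • vecMulVec (x + y) (x + y) + (1 / 2 : K) • vecMulVec (x - y) (x - y) := by
  ext i j
  simp only [add_apply, smul_apply, vecMulVec_apply, Pi.add_apply, Pi.sub_apply, smul_eq_mul]
  linear_combination (-(x i * x j + y i * y j)) * (mul_one_div_cancel (two_ne_zero (α := K)))

theorem ternary_vecMulVec_decomposition {ι : Type*} {x y : ι → ℝ} (hx : ∀ j, IsTernary (x j))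
    (hy : ∀ j, IsTernary (y j)) (hxy : ∀ j, x j = 0 ∨ y j = 0) :
    (∀ j, IsTernary ((x + y) j)) ∧ (∀ j, IsTernary ((x - y) j)) ∧
      vecMulVec x x + vecMulVec y y =
        (1 / 2 : ℝ) • vecMulVec (x + y) (x + y) + (1 / 2 : ℝ) • vecMulVec (x - y) (x - y) :=
  ⟨fun j => (hx j).add (hy j) (hxy j), fun j => (hx j).sub (hy j) (hxy j),
    vecMulVec_add_vecMulVec_eq_half_smul x y⟩

namespace Matrix

variable {ι R : Type*}

def IsIdentityOn [DecidableEq ι] [Zero R] [One R] (X : Matrix ι ι R) (s : Finset ι) : Prop :=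
  ∀ i ∈ s, ∀ j ∈ s, X i j = if i = j then 1 else 0

lemma IsIdentityOn.card_le_rank [Fintype ι] [DecidableEq ι] [CommRing R] [StrongRankCondition R]
    {X : Matrix ι ι R} {s : Finset ι} (hs : X.IsIdentityOn s) : s.card ≤ X.rank := by
  have hsub : X.submatrix (Subtype.val : s → ι) (Subtype.val : s → ι) = 1 := by
    ext i j
    rw [submatrix_apply, hs i i.2 j j.2, one_apply]
    simp only [Subtype.val_inj]
  simpa [hsub, rank_one] using rank_submatrix_le X (Subtype.val : s → ι) (Subtype.val : s → ι)

lemma rank_le_card_of_apply_eq_sum [Fintype ι] [CommRing R] [StrongRankCondition R]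
    {X : Matrix ι ι R} {s : Finset ι} (h : ∀ a b, X a b = ∑ i ∈ s, X i a * X i b) :
    X.rank ≤ s.card := by
  set C : Matrix s ι R := X.submatrix (↑) id
  have hC : X = Cᵀ * C := by
    ext a b
    simp only [C, mul_apply, transpose_apply, submatrix_apply, id, h a b]
    exact (Finset.sum_coe_sort s _).symm
  calc X.rank ≤ C.rank := hC ▸ rank_mul_le_right _ _
    _ ≤ s.card := by simpa using rank_le_card_height C

lemma exists_isIdentityOn_forall_exists_apply_ne_zero [Fintype ι] [DecidableEq ι] [Zero R] [One R]
    [NeZero (1 : R)] {X : Matrix ι ι R} (hX : X.IsSymm) :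
    ∃ s : Finset ι, X.IsIdentityOn s ∧ ∀ a, X a a = 1 → ∃ i ∈ s, X i a ≠ 0 := by
  classical
  obtain ⟨s, hs, hmax⟩ := Finset.exists_max_image
    ({s | X.IsIdentityOn s} : Finset (Finset ι)) Finset.card
    ⟨∅, (Finset.mem_filter_univ _).mpr (by simp [IsIdentityOn])⟩
  rw [Finset.mem_filter_univ] at hs
  refine ⟨s, hs, fun a haa => by_contra fun hcov => ?_⟩
  push Not at hcov
  have ha : a ∉ s := fun ha => by simpa [haa] using hcov a ha
  have hins : X.IsIdentityOn (insert a s) := by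
    simp only [IsIdentityOn, Finset.forall_mem_insert]
    refine ⟨⟨by simpa using haa, fun j hj => ?_⟩, fun i hi => ⟨?_, hs i hi⟩⟩
    · rw [hX.apply, hcov j hj, if_neg (ne_of_mem_of_not_mem hj ha).symm]
    · rw [hcov i hi, if_neg (ne_of_mem_of_not_mem hi ha)]
  have hcard := hmax _ (by simpa using hins)
  rw [Finset.card_insert_of_notMem ha] at hcard
  omega

variable {X : Matrix ι ι ℝ}

lemma PosSemidef.isSymm_s4 (hX : X.PosSemidef) : X.IsSymm := by
  rw [IsSymm, ← conjTranspose_eq_transpose_of_trivial]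
  exact hX.isHermitian

lemma PosSemidef.mul_self_apply_le (hX : X.PosSemidef) (i j : ι) :
    X i j * X i j ≤ X i i * X j j := by
  have h := (hX.submatrix ![i, j]).det_nonneg
  rw [det_fin_two] at h
  simpa only [Fin.isValue, submatrix_apply, cons_val_zero, cons_val_one, cons_val_fin_one,
    hX.isSymm_s4.apply, sub_nonneg] using h

section Ternary

variable (ht : ∀ i j, IsTernary (X i j)) (hX : X.PosSemidef)
include ht hX

lemma diag_eq_one_of_apply_ne_zero {i j : ι} (h : X i j ≠ 0) : X i i = 1 := by
  have hle := hX.mul_self_apply_le i j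
  rw [(ht i j).mul_self_eq_one h] at hle
  rcases (ht i i).eq_zero_or_eq_one_of_nonneg hX.diag_nonneg with h0 | h1
  · rw [h0, zero_mul] at hle; linarith
  · exact h1

lemma row_eq_smul_row [Fintype ι] {i j : ι} (h : X i j ≠ 0) : X j = X i j • X i := by
  classical
  have hii := diag_eq_one_of_apply_ne_zero ht hX h
  have hjj := diag_eq_one_of_apply_ne_zero ht hX (by rwa [hX.isSymm_s4.apply] : X j i ≠ 0)
  have hsq := (ht i j).mul_self_eq_one h
  by_cases hij : i = j
  · subst hij; rw [hii, one_smul]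
  set w : ι → ℝ := Pi.single i (X i j) - Pi.single j 1
  have hq : star w ⬝ᵥ X *ᵥ w = 0 := by
    simp only [star_trivial, mulVec_sub, mulVec_single, op_smul_eq_smul, MulOpposite.op_one,
      one_smul, dotProduct_sub, dotProduct_smul, sub_dotProduct, single_dotProduct, col_apply, hii,
      mul_one, hX.isSymm_s4.apply i j, one_mul, sub_self, smul_eq_mul, mul_zero, hjj, zero_sub,
      neg_sub, w]
    linear_combination -hsq
  have hker : X *ᵥ w = 0 := (hX.dotProduct_mulVec_zero_iff w).mp hq
  ext k
  have hk : X i j * X k i - X k j = 0 := by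
    simpa [w, mulVec_sub, mulVec_single] using congrFun hker k
  rw [Pi.smul_apply, smul_eq_mul, ← hX.isSymm_s4.apply, ← hX.isSymm_s4.apply i k]
  linarith

lemma apply_eq_zero_of_apply_eq_zero [Fintype ι] {i j a : ι} (hij : X i j = 0) (hia : X i a ≠ 0) :
    X j a = 0 := by
  rw [← hX.isSymm_s4.apply, row_eq_smul_row ht hX hia, Pi.smul_apply, hij, smul_zero]

lemma apply_eq_sum_of_isIdentityOn [Fintype ι] [DecidableEq ι] {s : Finset ι}
    (hs : X.IsIdentityOn s) (hcov : ∀ a, X a a = 1 → ∃ i ∈ s, X i a ≠ 0) (a b : ι) :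
    X a b = ∑ i ∈ s, X i a * X i b := by
  rcases (ht a a).eq_zero_or_eq_one_of_nonneg hX.diag_nonneg with haa | haa
  · have hcol : ∀ c, X c a = 0 := fun c => by_contra fun h => by
      simpa [haa] using diag_eq_one_of_apply_ne_zero ht hX (by rwa [hX.isSymm_s4.apply] : X a c ≠ 0)
    simp [← hX.isSymm_s4.apply a b, hcol]
  · obtain ⟨k, hk, hka⟩ := hcov a haa
    rw [Finset.sum_eq_single_of_mem k hk fun i hi hik => ?_]
    · rw [row_eq_smul_row ht hX hka]; rfl
    · have hki : X k i = 0 := by simpa [Ne.symm hik] using hs k hk i hi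
      rw [apply_eq_zero_of_apply_eq_zero ht hX hki hka, zero_mul]

theorem exists_isIdentityOn_card_eq_rank [Fintype ι] [DecidableEq ι] :
    ∃ s : Finset ι, s.card = X.rank ∧ X.IsIdentityOn s ∧ ∀ a b, X a b = ∑ i ∈ s, X i a * X i b := by
  obtain ⟨s, hs, hcov⟩ := exists_isIdentityOn_forall_exists_apply_ne_zero hX.isSymm_s4
  have hsum := apply_eq_sum_of_isIdentityOn ht hX hs hcov
  exact ⟨s, hs.card_le_rank.antisymm (rank_le_card_of_apply_eq_sum hsum), hs, hsum⟩

theorem exists_eq_vecMulVec_add_vecMulVec_of_rank_eq_two [Fintype ι] [DecidableEq ι]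
    (hr : X.rank = 2) :
    ∃ y₁ y₂ : ι → ℝ, (∀ j, IsTernary (y₁ j)) ∧ (∀ j, IsTernary (y₂ j)) ∧
      (∀ j, y₁ j = 0 ∨ y₂ j = 0) ∧ X = vecMulVec y₁ y₁ + vecMulVec y₂ y₂ := by
  obtain ⟨s, hcard, hs, hsum⟩ := exists_isIdentityOn_card_eq_rank ht hX
  obtain ⟨i₁, i₂, hne, rfl⟩ := Finset.card_eq_two.mp (hcard.trans hr)
  have h12 : X i₁ i₂ = 0 := by simpa [hne] using hs i₁ (by simp) i₂ (by simp)
  refine ⟨X i₁, X i₂, ht i₁, ht i₂, fun a => ?_, ?_⟩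
  · exact (em (X i₁ a = 0)).imp_right (apply_eq_zero_of_apply_eq_zero ht hX h12)
  · ext a b
    simp [hsum a b, Finset.sum_pair hne, vecMulVec_apply]

end Ternary

end Matrix

theorem stmt_4 (n : ℕ) (x₁ x₂ : Fin n → ℝ)
    (hx₁ : ∀ j, x₁ j = 0 ∨ x₁ j = -1 ∨ x₁ j = 1)
    (hx₂ : ∀ j, x₂ j = 0 ∨ x₂ j = -1 ∨ x₂ j = 1)
    (hdisj : ∀ j, x₁ j = 0 ∨ x₂ j = 0)
    (u v : Fin n → ℝ)
    (hu : ∀ j, u j = (if x₁ j = 1 ∨ x₂ j = 1 then (1 : ℝ) else 0) -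
      (if x₁ j = -1 ∨ x₂ j = -1 then (1 : ℝ) else 0))
    (hv : ∀ j, v j = (if x₁ j = 1 ∨ x₂ j = -1 then (1 : ℝ) else 0) -
      (if x₂ j = 1 ∨ x₁ j = -1 then (1 : ℝ) else 0)) :
    ((∀ j, u j = 0 ∨ u j = -1 ∨ u j = 1) ∧
     (∀ j, v j = 0 ∨ v j = -1 ∨ v j = 1) ∧
     vecMulVec x₁ x₁ + vecMulVec x₂ x₂ =
       (1 / 2 : ℝ) • vecMulVec u u + (1 / 2 : ℝ) • vecMulVec v v) ∧
    (∀ X : Matrix (Fin n) (Fin n) ℝ,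
      (∀ i j, X i j = 0 ∨ X i j = -1 ∨ X i j = 1) → X.PosSemidef → X.rank = 2 →
      ∃ u' v' : Fin n → ℝ,
        (∀ j, u' j = 0 ∨ u' j = -1 ∨ u' j = 1) ∧
        (∀ j, v' j = 0 ∨ v' j = -1 ∨ v' j = 1) ∧
        X = (1 / 2 : ℝ) • vecMulVec u' u' + (1 / 2 : ℝ) • vecMulVec v' v') := by
  obtain rfl : u = x₁ + x₂ :=
    funext fun j => (hu j).trans (ite_or_sub_ite_or_eq_add (hx₁ j) (hx₂ j) (hdisj j))
  obtain rfl : v = x₁ - x₂ :=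
    funext fun j => (hv j).trans (ite_or_sub_ite_or_eq_sub (hx₁ j) (hx₂ j) (hdisj j))
  refine ⟨ternary_vecMulVec_decomposition hx₁ hx₂ hdisj, fun X ht hX hr => ?_⟩
  obtain ⟨y₁, y₂, hy₁, hy₂, hy, rfl⟩ := exists_eq_vecMulVec_add_vecMulVec_of_rank_eq_two ht hX hr
  obtain ⟨hu, hv, hdecomp⟩ := ternary_vecMulVec_decomposition hy₁ hy₂ hy
  exact ⟨y₁ + y₂, y₁ - y₂, hu, hv, hdecomp⟩
end

section
/- Let IQ¹ₙ be the convex hull of {x xᵀ : x ∈ {0, −1, 1}ⁿ} in the space of real n×n matrices, and let P¹_{2n+1} be the convex hull of {w wᵀ : w ∈ {0, 1}^{2n+1}}. Then IQ¹ₙ equals the set of matrices of the form Z¹¹ + Z²² − Z¹² − Z²¹, where there exist vectors z₁, z₂ ∈ ℝⁿ and n×n matrices Z¹¹, Z¹², Z²¹, Z²² such that the (2n+1)×(2n+1) block matrix L with top-left entry 1, first row (1, z₁ᵀ, z₂ᵀ) and corresponding first column, and 2×2 block structure (Z¹¹, Z¹²; Z²¹, Z²²) lies in P¹_{2n+1},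 with diag(Z¹¹) = z₁, diag(Z²²) = z₂, and z₁ + z₂ ≤ 𝟙ₙ componentwise. -/
open Matrix

/-- The lifted `(2n+1) × (2n+1)` block matrix with top-left entry `1`,
border vector `(z₁, z₂)` and blocks `Z11, Z12, Z21, Z22`. -/
noncomputable def lifted (n : ℕ) (z₁ z₂ : Fin n → ℝ)
    (Z11 Z12 Z21 Z22 : Matrix (Fin n) (Fin n) ℝ) :
    Matrix (Fin 1 ⊕ (Fin n ⊕ Fin n)) (Fin 1 ⊕ (Fin n ⊕ Fin n)) ℝ :=
  Matrix.fromBlocks (Matrix.of fun _ _ => (1 : ℝ))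
    (Matrix.of fun _ j => Sum.elim z₁ z₂ j)
    (Matrix.of fun i _ => Sum.elim z₁ z₂ i)
    (Matrix.fromBlocks Z11 Z12 Z21 Z22)

theorem stmt_6 (n : ℕ) :
    convexHull ℝ {X : Matrix (Fin n) (Fin n) ℝ | ∃ x : Fin n → ℝ,
        (∀ i, x i = 0 ∨ x i = -1 ∨ x i = 1) ∧ X = vecMulVec x x}
    = {M : Matrix (Fin n) (Fin n) ℝ |
        ∃ (z₁ z₂ : Fin n → ℝ) (Z11 Z12 Z21 Z22 : Matrix (Fin n) (Fin n) ℝ),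
          lifted n z₁ z₂ Z11 Z12 Z21 Z22 ∈
            convexHull ℝ
              {W : Matrix (Fin 1 ⊕ (Fin n ⊕ Fin n)) (Fin 1 ⊕ (Fin n ⊕ Fin n)) ℝ |
                ∃ w : Fin 1 ⊕ (Fin n ⊕ Fin n) → ℝ,
                  (∀ i, w i = 0 ∨ w i = 1) ∧ W = vecMulVec w w} ∧
          (∀ i, Z11 i i = z₁ i) ∧ (∀ i, Z22 i i = z₂ i) ∧
          (∀ i, z₁ i + z₂ i ≤ 1) ∧
          M = Z11 + Z22 - Z12 - Z21} := by
  classical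
  apply Set.Subset.antisymm
  · apply convexHull_min
    · rintro X ⟨x, hx, rfl⟩
      set u : Fin n → ℝ := fun i => if x i = 1 then 1 else 0 with hu
      set v : Fin n → ℝ := fun i => if x i = -1 then 1 else 0 with hv
      have hxuv : ∀ i, x i = u i - v i := by
        intro i; rcases hx i with h | h | h <;> simp [hu, hv, h] <;> norm_num
      refine ⟨u, v, vecMulVec u u, vecMulVec u v, vecMulVec v u, vecMulVec v v, ?_, ?_, ?_, ?_, ?_⟩
      · apply subset_convexHull
        refine ⟨Sum.elim (fun _ => 1) (Sum.elim u v), ?_, ?_⟩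
        · rintro (i | i | i)
          · simp
          · rcases hx i with h | h | h <;> simp [hu, hv, h] <;> norm_num
          · rcases hx i with h | h | h <;> simp [hu, hv, h] <;> norm_num
        · ext (i | i | i) (j | j | j) <;>
            simp [lifted, vecMulVec, Matrix.fromBlocks]
      · intro i; simp only [vecMulVec_apply, hu]; split <;> norm_num
      · intro i; simp only [vecMulVec_apply, hv]; split <;> norm_num
      · intro i; rcases hx i with h | h | h <;> simp [hu, hv, h] <;> norm_num
      · ext i j
        simp only [Matrix.sub_apply, Matrix.add_apply, vecMulVec_apply, hxuv i, hxuv j]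
        ring
    · rintro M₁ ⟨z₁, z₂, A, B, C, D, hL, hd1, hd2, hle, rfl⟩
        M₂ ⟨w₁, w₂, A', B', C', D', hL', hd1', hd2', hle', rfl⟩ a b ha hb hab
      refine ⟨a • z₁ + b • w₁, a • z₂ + b • w₂, a • A + b • A', a • B + b • B',
        a • C + b • C', a • D + b • D', ?_, ?_, ?_, ?_, ?_⟩
      · have hmem := (convex_convexHull ℝ _) hL hL' ha hb hab
        convert hmem using 1
        ext (i | i | i) (j | j | j) <;>
          simp [lifted, Matrix.fromBlocks, Matrix.add_apply, Matrix.smul_apply,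
            Pi.add_apply, Pi.smul_apply, smul_eq_mul] <;> linarith
      · intro i; simp [Matrix.add_apply, Matrix.smul_apply, hd1 i, hd1' i, smul_eq_mul]
      · intro i; simp [Matrix.add_apply, Matrix.smul_apply, hd2 i, hd2' i, smul_eq_mul]
      · intro i
        have h1 := hle i; have h2 := hle' i
        simp only [Pi.add_apply, Pi.smul_apply, smul_eq_mul]
        nlinarith
      · ext i j
        simp [Matrix.sub_apply, Matrix.add_apply, Matrix.smul_apply, smul_eq_mul]
        ring
  · rintro M ⟨z₁, z₂, A, B, C, D, hL, -, -, -, rfl⟩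
    let φ : Matrix (Fin 1 ⊕ (Fin n ⊕ Fin n)) (Fin 1 ⊕ (Fin n ⊕ Fin n)) ℝ →ₗ[ℝ]
        Matrix (Fin n) (Fin n) ℝ :=
      { toFun := fun W => Matrix.of fun i j =>
          W (Sum.inr (Sum.inl i)) (Sum.inr (Sum.inl j))
          + W (Sum.inr (Sum.inr i)) (Sum.inr (Sum.inr j))
          - W (Sum.inr (Sum.inl i)) (Sum.inr (Sum.inr j))
          - W (Sum.inr (Sum.inr i)) (Sum.inr (Sum.inl j))
        map_add' := by intros W₁ W₂; ext i j; simp [Matrix.add_apply]; ring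
        map_smul' := by intros c W; ext i j; simp [Matrix.smul_apply, smul_eq_mul]; ring }
    have hM : A + D - B - C = φ (lifted n z₁ z₂ A B C D) := by
      ext i j
      simp [φ, lifted, Matrix.fromBlocks, Matrix.sub_apply, Matrix.add_apply]
    rw [hM]
    have h := Set.mem_image_of_mem φ hL
    rw [φ.image_convexHull] at h
    refine convexHull_mono ?_ h
    rintro _ ⟨W, ⟨w, hw, rfl⟩, rfl⟩
    refine ⟨fun i => w (Sum.inr (Sum.inl i)) - w (Sum.inr (Sum.inr i)), ?_, ?_⟩
    · intro i
      rcases hw (Sum.inr (Sum.inl i)) with h1 | h1 <;>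
        rcases hw (Sum.inr (Sum.inr i)) with h2 | h2 <;> simp [h1, h2]
    · ext i j
      simp [φ, vecMulVec_apply]
      ring
end

section
/- The 3×3 symmetric matrix A = (1/3)·[[1, 1, −1], [1, 1, 1], [−1, 1, 3]] satisfies all triangle inequalities A_ij + A_ik + A_jk ≥ −1, −A_ij + A_ik − A_jk ≥ −1, A_ij − A_ik − A_jk ≥ −1, −A_ij − A_ik + A_jk ≥ −1 (for 1 ≤ i < j < k ≤ 3), the pair inequalities −A_ii ≤ A_ij ≤ A_ii for i ≠ j, and A_ii ≤ 1 for all i, yet A is not positive semidefinite; consequently A does not lie in the convex hull of {x xᵀ : x ∈ {0, −1, 1}³}. -/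
open Matrix

/-
Every matrix x xᵀ is positive semidefinite and the PSD matrices form a convex cone, so the whole
convex hull of {x xᵀ : x ∈ {0, ±1}³} is PSD. The matrix A, although it satisfies all the triangle
and pair inequalities entrywise, has negative quadratic form at v = (1, -1, 1): vᵀAv = -1/3.
-/

open scoped ComplexOrder in
theorem Matrix.convex_setOf_posSemidef {n 𝕜 : Type*} [RCLike 𝕜] :
    Convex ℝ {M : Matrix n n 𝕜 | M.PosSemidef} :=
  fun _ hM _ hN _ _ ha hb _ => (hM.smul ha).add (hN.smul hb)

theorem Matrix.posSemidef_of_mem_convexHull_vecMulVec_self {n : Type*} [Fintype n]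
    {p : (n → ℝ) → Prop} {M : Matrix n n ℝ}
    (hM : M ∈ convexHull ℝ {X | ∃ x, p x ∧ X = vecMulVec x x}) : M.PosSemidef := by
  have hsub : {X | ∃ x, p x ∧ X = vecMulVec x x} ⊆ {X : Matrix n n ℝ | X.PosSemidef} := by
    rintro _ ⟨x, -, rfl⟩
    exact posSemidef_vecMulVec_self_star x
  exact convexHull_min hsub convex_setOf_posSemidef hM

theorem stmt_7 (A : Matrix (Fin 3) (Fin 3) ℝ)
    (hA : A = (1 / 3 : ℝ) • !![1, 1, -1; 1, 1, 1; -1, 1, 3]) :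
    (∀ i j k : Fin 3, i < j → j < k →
        -1 ≤ A i j + A i k + A j k ∧
        -1 ≤ -A i j + A i k - A j k ∧
        -1 ≤ A i j - A i k - A j k ∧
        -1 ≤ -A i j - A i k + A j k) ∧
    (∀ i j : Fin 3, i ≠ j → -A i i ≤ A i j ∧ A i j ≤ A i i) ∧
    (∀ i : Fin 3, A i i ≤ 1) ∧
    ¬ A.PosSemidef ∧
    A ∉ convexHull ℝ {X : Matrix (Fin 3) (Fin 3) ℝ | ∃ x : Fin 3 → ℝ,
        (∀ i, x i = 0 ∨ x i = -1 ∨ x i = 1) ∧ X = vecMulVec x x} := by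
  have not_psd : ¬ A.PosSemidef := fun h => by
    have := h.dotProduct_mulVec_nonneg ![1, -1, 1]
    simp [hA, dotProduct, mulVec, Fin.sum_univ_three] at this
    linarith
  subst hA
  refine ⟨?_, ?_, ?_, not_psd, fun hmem => not_psd ?_⟩
  · intro i j k _ _
    fin_cases i <;> fin_cases j <;> fin_cases k <;> norm_num
  · intro i j _
    fin_cases i <;> fin_cases j <;> norm_num
  · intro i
    fin_cases i <;> norm_num
  · exact posSemidef_of_mem_convexHull_vecMulVec_self hmem
end

section
/- Let X be a symmetric n×n positive semidefinite matrix whose entries all lie in {0, −1, 1}, let S ⊆ {1, …, n} with |S| = 2m + 1 odd, and let v_i ∈ {−1, 1} for each i ∈ S. Then Σ_{i,j ∈ S, i < j} v_i v_j X_ij ≥ −m (that is, the sum is at least ⌈−|S|/2⌉). -/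
open Matrix

theorem stmt_8 (n m : ℕ) (X : Matrix (Fin n) (Fin n) ℝ)
    (hsymm : X.IsSymm) (hpsd : X.PosSemidef)
    (hternary : ∀ i j, X i j = 0 ∨ X i j = -1 ∨ X i j = 1)
    (S : Finset (Fin n)) (hS : S.card = 2 * m + 1)
    (v : Fin n → ℝ) (hv : ∀ i ∈ S, v i = -1 ∨ v i = 1) :
    -(m : ℝ) ≤ ∑ i ∈ S, ∑ j ∈ S.filter (fun j => i < j), v i * v j * X i j := by
  classical
  have hXsym : ∀ i j, X j i = X i j := by
    intro i j
    have := hsymm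
    rw [Matrix.IsSymm] at this
    calc X j i = Xᵀ i j := rfl
    _ = X i j := by rw [this]
  -- diagonal entries nonnegative
  have hdiag : ∀ i, 0 ≤ X i i := by
    intro i
    have h := hpsd.dotProduct_mulVec_nonneg (Pi.single i 1)
    simpa [dotProduct, mulVec, Pi.single_apply, Finset.sum_ite_eq] using h
  have hdiag1 : ∀ i, X i i ≤ 1 := by
    intro i
    rcases hternary i i with h | h | h <;> linarith [hdiag i]
  -- v squared
  have hv2 : ∀ i ∈ S, v i * v i = 1 := by
    intro i hi; rcases hv i hi with h | h <;> rw [h] <;> norm_num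
  -- quadratic form with indicator vector
  set w : Fin n → ℝ := fun i => if i ∈ S then v i else 0 with hw
  have hq0 : 0 ≤ ∑ i, ∑ j, w i * (X i j * w j) := by
    have h := hpsd.dotProduct_mulVec_nonneg w
    simpa [dotProduct, mulVec, Finset.mul_sum] using h
  have hA : ∑ i, ∑ j, w i * (X i j * w j) = ∑ i ∈ S, ∑ j ∈ S, v i * v j * X i j := by
    rw [← Finset.sum_subset (Finset.subset_univ S)]
    · apply Finset.sum_congr rfl
      intro i hi
      rw [← Finset.sum_subset (Finset.subset_univ S)]
      · apply Finset.sum_congr rfl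
        intro j hj
        simp only [hw, if_pos hi, if_pos hj]; ring
      · intro j _ hj
        simp [hw, hj]
    · intro i _ hi
      simp [hw, hi]
  -- split double sum
  have hsplit : ∀ i ∈ S, ∑ j ∈ S, v i * v j * X i j =
      (∑ j ∈ S.filter (fun j => i < j), v i * v j * X i j) +
      (∑ j ∈ S.filter (fun j => j < i), v i * v j * X i j) + X i i := by
    intro i hi
    have : ∀ j ∈ S, v i * v j * X i j =
        (if i < j then v i * v j * X i j else 0) +
        ((if j < i then v i * v j * X i j else 0) +
        (if j = i then v i * v j * X i j else 0)) := by
      intro j _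
      rcases lt_trichotomy i j with h | h | h
      · simp [h, asymm h, h.ne']
      · simp [h]
      · simp [h, asymm h, h.ne]
    rw [Finset.sum_congr rfl this, Finset.sum_add_distrib, Finset.sum_add_distrib,
      ← Finset.sum_filter, ← Finset.sum_filter, Finset.sum_ite_eq' S i]
    rw [if_pos hi]
    have : v i * v i * X i i = X i i := by rw [hv2 i hi]; ring
    rw [this, add_assoc]
  -- the two off-diagonal sums are equal
  have hswap : ∑ i ∈ S, ∑ j ∈ S.filter (fun j => j < i), v i * v j * X i j
      = ∑ i ∈ S, ∑ j ∈ S.filter (fun j => i < j), v i * v j * X i j := by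
    simp only [Finset.sum_filter]
    rw [Finset.sum_comm]
    apply Finset.sum_congr rfl
    intro i _
    apply Finset.sum_congr rfl
    intro j _
    by_cases h : i < j
    · simp only [if_pos h]; rw [hXsym i j]; ring
    · simp [h]
  set T := ∑ i ∈ S, ∑ j ∈ S.filter (fun j => i < j), v i * v j * X i j with hT
  have hDle : ∑ i ∈ S, X i i ≤ (2 * m + 1 : ℝ) := by
    calc ∑ i ∈ S, X i i ≤ ∑ i ∈ S, (1:ℝ) := Finset.sum_le_sum fun i _ => hdiag1 i
    _ = (S.card : ℝ) := by simp
    _ = (2 * m + 1 : ℝ) := by rw [hS]; push_cast; ring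
  have hkey : -(2 * (m:ℝ) + 1) ≤ 2 * T := by
    have : 0 ≤ T + T + ∑ i ∈ S, X i i := by
      have := hq0
      rw [hA] at this
      rw [Finset.sum_congr rfl hsplit, Finset.sum_add_distrib, Finset.sum_add_distrib, hswap] at this
      linarith
    linarith
  -- integrality
  have hint : ∃ z : ℤ, T = (z : ℝ) := by
    refine ⟨∑ i ∈ S, ∑ j ∈ S.filter (fun j => i < j),
      ((if v i = v j then 1 else -1) * (if X i j = 1 then 1 else if X i j = -1 then -1 else 0) : ℤ), ?_⟩
    rw [hT]
    push_cast
    apply Finset.sum_congr rfl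
    intro i hi
    apply Finset.sum_congr rfl
    intro j hj
    have hjS : j ∈ S := (Finset.mem_filter.mp hj).1
    rcases hv i hi with h1 | h1 <;> rcases hv j hjS with h2 | h2 <;>
      rcases hternary i j with h3 | h3 | h3 <;>
      simp [h1, h2, h3] <;> norm_num
  obtain ⟨z, hz⟩ := hint
  have h2z : -(2 * (m:ℤ) + 1) ≤ 2 * z := by
    have : -(2 * (m:ℝ) + 1) ≤ 2 * (z : ℝ) := by rw [← hz]; exact hkey
    exact_mod_cast this
  have : -(m:ℤ) ≤ z := by omega
  rw [hz]
  exact_mod_cast this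
end

section
/- Let x ∈ {0, −1, 1}ⁿ and let X be a real symmetric n×n matrix with diag(X) = |x|. If the (n+1)×(n+1) bordered matrix with top-left entry 1, border x, and lower-right block X is positive semidefinite, then X = x xᵀ (so in particular all entries of X lie in {0, −1, 1}). -/
open Matrix

theorem stmt_9 (n : ℕ) (x : Fin n → ℝ)
    (hx : ∀ i, x i = 0 ∨ x i = -1 ∨ x i = 1)
    (X : Matrix (Fin n) (Fin n) ℝ)
    (hsymm : X.IsSymm) (hdiag : ∀ i, X i i = |x i|)
    (Y : Matrix (Fin 1 ⊕ Fin n) (Fin 1 ⊕ Fin n) ℝ)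
    (hY : Y = Matrix.fromBlocks (Matrix.of fun _ _ => (1 : ℝ))
      (Matrix.of fun _ j => x j) (Matrix.of fun i _ => x i) X)
    (hpsd : Y.PosSemidef) :
    X = vecMulVec x x ∧ (∀ i j, X i j = 0 ∨ X i j = -1 ∨ X i j = 1) := by
  have hsym' : ∀ i j, X i j = X j i := fun i j => by
    have := congrFun (congrFun hsymm j) i; simpa [Matrix.transpose_apply] using this
  have hrow0 : ∀ i, x i = 0 → ∀ j, X j i = 0 := by
    intro i hxi j
    have hdi : X i i = 0 := by rw [hdiag i, hxi, abs_zero]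
    set v : Fin 1 ⊕ Fin n → ℝ :=
      Sum.elim (fun _ => 0) (fun k => if k = i then 1 else 0) with hv
    have hq : star v ⬝ᵥ Y *ᵥ v = 0 := by
      simp [hY, hv, Matrix.mulVec, dotProduct, Fintype.sum_sum_type,
        mul_ite, ite_mul, hdi]
    have h0 := (hpsd.dotProduct_mulVec_zero_iff v).mp hq
    have h1 := congrFun h0 (Sum.inr j)
    simpa [hY, hv, Matrix.mulVec, dotProduct, Fintype.sum_sum_type,
      mul_ite, ite_mul] using h1
  have hcol : ∀ i, x i ≠ 0 → ∀ j, X j i = x i * x j := by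
    intro i hxi j
    have hXii : X i i = 1 := by
      rw [hdiag i]; rcases hx i with h | h | h <;> simp [h] at hxi ⊢
    have hx2 : x i * x i = 1 := by
      rcases hx i with h | h | h <;> simp [h] at hxi ⊢
    set v : Fin 1 ⊕ Fin n → ℝ :=
      Sum.elim (fun _ => 1) (fun k => if k = i then -x i else 0) with hv
    have hq : star v ⬝ᵥ Y *ᵥ v = 0 := by
      simp [hY, hv, Matrix.mulVec, dotProduct, Fintype.sum_sum_type,
        mul_ite, ite_mul, hXii]
      ring_nf
      nlinarith [hx2]
    have h0 := (hpsd.dotProduct_mulVec_zero_iff v).mp hq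
    have h1 := congrFun h0 (Sum.inr j)
    have h2 : x j + X j i * (-x i) = 0 := by
      simpa [hY, hv, Matrix.mulVec, dotProduct, Fintype.sum_sum_type,
        mul_ite, ite_mul] using h1
    have h3 : X j i * x i = x j := by linarith
    calc X j i = X j i * (x i * x i) := by rw [hx2, mul_one]
      _ = (X j i * x i) * x i := by ring
      _ = x j * x i := by rw [h3]
      _ = x i * x j := by ring
  have main : ∀ i j, X i j = x i * x j := by
    intro i j
    by_cases hxi : x i = 0
    · rw [hsym' i j, hrow0 i hxi j, hxi, zero_mul]
    · rw [hsym' i j, hcol i hxi j]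
  refine ⟨?_, ?_⟩
  · ext i j; simp [Matrix.vecMulVec_apply, main i j]
  · intro i j
    rw [main i j]
    rcases hx i with h | h | h <;> rcases hx j with h' | h' | h' <;>
      simp [h, h']
end

section
/- Let x ∈ {0, −1, 1}ⁿ and let X be a real symmetric n×n matrix with diag(X) = |x| such that the (n+1)×(n+1) bordered matrix Y (with top-left entry 1, border x, block X) is positive semidefinite. Given a_i ∈ ℝⁿ and b_i ∈ ℝ for i = 1, …, p, let S = Σ_{i=1}^p w_i w_iᵀ where w_i = (−b_i, a_iᵀ)ᵀ ∈ ℝ^{n+1}. Then a_iᵀ x = b_i for all i ∈ {1, …, p} if and only if ⟨S, Y⟩ = 0, where ⟨·,·⟩ denotes the trace inner product. -/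
open Matrix

theorem stmt_10 (n p : ℕ) (x : Fin n → ℝ)
    (hx : ∀ i, x i = 0 ∨ x i = -1 ∨ x i = 1)
    (X : Matrix (Fin n) (Fin n) ℝ)
    (hsymm : X.IsSymm) (hdiag : ∀ i, X i i = |x i|)
    (Y : Matrix (Fin 1 ⊕ Fin n) (Fin 1 ⊕ Fin n) ℝ)
    (hY : Y = Matrix.fromBlocks (Matrix.of fun _ _ => (1 : ℝ))
      (Matrix.of fun _ j => x j) (Matrix.of fun i _ => x i) X)
    (hpsd : Y.PosSemidef)
    (a : Fin p → Fin n → ℝ) (b : Fin p → ℝ)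
    (w : Fin p → Fin 1 ⊕ Fin n → ℝ)
    (hw : ∀ i, w i = Sum.elim (fun _ => -b i) (a i))
    (S : Matrix (Fin 1 ⊕ Fin n) (Fin 1 ⊕ Fin n) ℝ)
    (hS : S = ∑ i, vecMulVec (w i) (w i)) :
    (∀ i, a i ⬝ᵥ x = b i) ↔ ∑ k, ∑ l, S k l * Y k l = 0 := by
  -- Step 1: psd + diagonal condition forces X = x xᵀ
  have key : ∀ k l, X k l = x k * x l := by
    intro l k
    set v : Fin 1 ⊕ Fin n → ℝ :=
      Sum.elim (fun _ => x k) (fun j => if j = k then -1 else 0) with hv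
    have habs : |x k| = x k * x k := by rcases hx k with h|h|h <;> rw [h] <;> norm_num
    have hdp : star v ⬝ᵥ Y *ᵥ v = 0 := by
      simp [hv, hY, dotProduct, mulVec, Fintype.sum_sum_type, fromBlocks, mul_ite,
        Finset.sum_ite_eq', hdiag, habs]
    have hz := (hpsd.dotProduct_mulVec_zero_iff v).mp hdp
    have := congrFun hz (Sum.inr l)
    simp [hv, hY, mulVec, dotProduct, Fintype.sum_sum_type, fromBlocks, mul_ite,
      Finset.sum_ite_eq'] at this
    linarith
  -- Step 2: Y = u uᵀ with u = (1, x)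
  set u : Fin 1 ⊕ Fin n → ℝ := Sum.elim (fun _ => (1:ℝ)) x with hu
  have hYu : ∀ k l, Y k l = u k * u l := by
    intro k l
    rcases k with k|k <;> rcases l with l|l <;> simp [hY, hu, fromBlocks, key]
  -- Step 3: the inner product is a sum of squares
  have hSY : ∑ k, ∑ l, S k l * Y k l = ∑ i, (a i ⬝ᵥ x - b i)^2 := by
    calc ∑ k, ∑ l, S k l * Y k l
        = ∑ k, ∑ l, ∑ i, (w i k * u k) * (w i l * u l) := by
          refine Finset.sum_congr rfl fun k _ => Finset.sum_congr rfl fun l _ => ?_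
          rw [hS, Matrix.sum_apply, Finset.sum_mul, hYu]
          exact Finset.sum_congr rfl fun i _ => by rw [vecMulVec_apply]; ring
      _ = ∑ i, ∑ k, ∑ l, (w i k * u k) * (w i l * u l) := by
          rw [Finset.sum_congr rfl fun (k : Fin 1 ⊕ Fin n) _ =>
            (Finset.sum_comm : ∑ l : Fin 1 ⊕ Fin n, ∑ i : Fin p, (w i k * u k) * (w i l * u l)
              = ∑ i : Fin p, ∑ l : Fin 1 ⊕ Fin n, (w i k * u k) * (w i l * u l))]
          exact Finset.sum_comm
      _ = ∑ i, (∑ k, w i k * u k) * (∑ l, w i l * u l) := by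
          exact Finset.sum_congr rfl fun i _ => (Finset.sum_mul_sum _ _ _ _).symm
      _ = ∑ i, (a i ⬝ᵥ x - b i)^2 := by
          refine Finset.sum_congr rfl fun i _ => ?_
          have : ∑ k, w i k * u k = a i ⬝ᵥ x - b i := by
            simp [hw, hu, Fintype.sum_sum_type, dotProduct]
            ring
          rw [this]; ring
  rw [hSY]
  constructor
  · intro h
    refine Finset.sum_eq_zero fun i _ => by rw [h i]; ring
  · intro h i
    have := (Finset.sum_eq_zero_iff_of_nonneg (fun i _ => sq_nonneg _)).mp h i (Finset.mem_univ i)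
    have := pow_eq_zero_iff (n := 2) (by norm_num) |>.mp this
    linarith
end

section
/- Let Q be a real symmetric n×n matrix, c ∈ ℝⁿ, and define f(x) = xᵀQx + cᵀx. If Q_ii ≤ 0 for some index i, then there exists a minimizer x* of f over the finite set {0, −1, 1}ⁿ with x*_i ∈ {−1, 1}. -/
/-!
Take any minimizer `x` of `f` over the finite cube `{0, -1, 1}ⁿ`. If `x i = 0`, replacing it by
`s = ±1` changes `f` by `s * (2 * (Q x)ᵢ + cᵢ) + Q i i`; choosing the sign of `s` against the
first-order term makes this change `≤ 0`, so the new point is again a minimizer.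
-/

open Matrix

variable {ι R : Type*}

def quadObjective [Fintype ι] [CommRing R] (Q : Matrix ι ι R) (c x : ι → R) : R :=
  x ⬝ᵥ Q *ᵥ x + c ⬝ᵥ x

def ternaryCube (ι R : Type*) [Ring R] : Set (ι → R) :=
  Set.univ.pi fun _ => {0, -1, 1}

theorem mem_ternaryCube [Ring R] {x : ι → R} :
    x ∈ ternaryCube ι R ↔ ∀ k, x k = 0 ∨ x k = -1 ∨ x k = 1 := by
  simp [ternaryCube]

theorem Matrix.IsSymm.dotProduct_mulVec_single [Fintype ι] [DecidableEq ι] [CommRing R]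
    {Q : Matrix ι ι R} (hQ : Q.IsSymm) (y : ι → R) (i : ι) (s : R) :
    y ⬝ᵥ Q *ᵥ Pi.single i s = (Q *ᵥ y) i * s := by
  rw [dotProduct_mulVec, ← mulVec_transpose, hQ.eq, dotProduct_single]

theorem quadObjective_add_single [Fintype ι] [DecidableEq ι] [CommRing R] {Q : Matrix ι ι R}
    (hQ : Q.IsSymm) (c y : ι → R) (i : ι) (s : R) :
    quadObjective Q c (y + Pi.single i s)
      = quadObjective Q c y + s * (2 * (Q *ᵥ y) i + c i) + s ^ 2 * Q i i := by
  have hii : (Q *ᵥ Pi.single i s) i = Q i i * s := by simp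
  simp only [quadObjective, mulVec_add, dotProduct_add, add_dotProduct, single_dotProduct,
    dotProduct_single, hQ.dotProduct_mulVec_single, Pi.add_apply, hii]
  ring

theorem exists_sign_quadObjective_update_le [Fintype ι] [DecidableEq ι] [CommRing R]
    [LinearOrder R] [IsStrictOrderedRing R] {Q : Matrix ι ι R}
    (hQ : Q.IsSymm) (c : ι → R) {y : ι → R} {i : ι} (hQii : Q i i ≤ 0) (hyi : y i = 0) :
    ∃ s : R, (s = -1 ∨ s = 1) ∧
      quadObjective Q c (Function.update y i s) ≤ quadObjective Q c y := by
  have hupdate (s : R) : Function.update y i s = y + Pi.single i s := by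
    ext k
    rcases eq_or_ne k i with rfl | hk
    · simp [hyi]
    · simp [hk]
  rcases le_total 0 (2 * (Q *ᵥ y) i + c i) with h | h
  · refine ⟨-1, .inl rfl, ?_⟩
    rw [hupdate, quadObjective_add_single hQ]
    nlinarith
  · refine ⟨1, .inr rfl, ?_⟩
    rw [hupdate, quadObjective_add_single hQ]
    nlinarith

theorem exists_isMinOn_quadObjective_ternaryCube [Fintype ι] [CommRing R] [LinearOrder R]
    (Q : Matrix ι ι R) (c : ι → R) :
    ∃ x ∈ ternaryCube ι R, IsMinOn (quadObjective Q c) (ternaryCube ι R) x :=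
  Set.exists_min_image _ _ (Set.Finite.pi fun _ => Set.toFinite _)
    ⟨0, mem_ternaryCube.2 fun _ => .inl rfl⟩

theorem stmt_12 (n : ℕ) (Q : Matrix (Fin n) (Fin n) ℝ) (hQsymm : Q.IsSymm)
    (c : Fin n → ℝ) (i : Fin n) (hQ : Q i i ≤ 0) :
    ∃ x : Fin n → ℝ,
      (∀ k, x k = 0 ∨ x k = -1 ∨ x k = 1) ∧
      (x i = -1 ∨ x i = 1) ∧
      (∀ y : Fin n → ℝ, (∀ k, y k = 0 ∨ y k = -1 ∨ y k = 1) →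
        x ⬝ᵥ Q *ᵥ x + c ⬝ᵥ x ≤ y ⬝ᵥ Q *ᵥ y + c ⬝ᵥ y) := by
  obtain ⟨x, hx, hmin⟩ := exists_isMinOn_quadObjective_ternaryCube Q c
  rw [mem_ternaryCube] at hx
  rcases hx i with hxi | hxi
  · obtain ⟨s, hs, hle⟩ := exists_sign_quadObjective_update_le hQsymm c hQ hxi
    refine ⟨Function.update x i s, fun k => ?_, by simpa using hs, fun y hy => ?_⟩
    · rcases eq_or_ne k i with rfl | hk
      · simpa using .inr hs
      · simpa [hk] using hx k
    · exact hle.trans (hmin (mem_ternaryCube.2 hy))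
  · exact ⟨x, hx, hxi, fun y hy => hmin (mem_ternaryCube.2 hy)⟩
end

section
/- Let Q be a real symmetric n×n matrix with Q_ii ≤ 0 for every i ∈ {1, …, n}, let c ∈ ℝⁿ, and define f(x) = xᵀQx + cᵀx. Then the minimum of f over {0, −1, 1}ⁿ equals the minimum of f over {−1, 1}ⁿ. -/
open Matrix

private lemma expand13 (n : ℕ) (Q : Matrix (Fin n) (Fin n) ℝ) (c x e : Fin n → ℝ) (t : ℝ) :
    (x + t • e) ⬝ᵥ Q *ᵥ (x + t • e) + c ⬝ᵥ (x + t • e)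
    = (x ⬝ᵥ Q *ᵥ x + c ⬝ᵥ x) + t * (x ⬝ᵥ Q *ᵥ e + e ⬝ᵥ Q *ᵥ x + c ⬝ᵥ e)
      + t ^ 2 * (e ⬝ᵥ Q *ᵥ e) := by
  simp [dotProduct_add, add_dotProduct, mulVec_add, mulVec_smul, dotProduct_smul,
    smul_dotProduct, smul_eq_mul]
  ring

private lemma step13 (n : ℕ) (Q : Matrix (Fin n) (Fin n) ℝ)
    (hdiag : ∀ i, Q i i ≤ 0) (c : Fin n → ℝ) (x : Fin n → ℝ) (j : Fin n)
    (hxj : x j = 0) :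
    ∃ t : ℝ, (t = -1 ∨ t = 1) ∧
      (Function.update x j t) ⬝ᵥ Q *ᵥ (Function.update x j t) + c ⬝ᵥ (Function.update x j t)
        ≤ x ⬝ᵥ Q *ᵥ x + c ⬝ᵥ x := by
  set e : Fin n → ℝ := Pi.single j 1 with he
  have hupd : ∀ t : ℝ, Function.update x j t = x + t • e := by
    intro t; funext i
    by_cases h : i = j
    · subst h; simp [he, hxj]
    · simp [he, Function.update, h, Pi.single_eq_of_ne h]
  set b : ℝ := x ⬝ᵥ Q *ᵥ e + e ⬝ᵥ Q *ᵥ x + c ⬝ᵥ e with hb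
  have hee : e ⬝ᵥ Q *ᵥ e = Q j j := by
    rw [he, single_dotProduct, Matrix.mulVec_single]; simp
  refine ⟨if 0 ≤ b then -1 else 1, by split <;> simp, ?_⟩
  rw [hupd, expand13, hee, ← hb]
  have h1 : (if 0 ≤ b then (-1:ℝ) else 1) * b ≤ 0 := by
    split <;> nlinarith
  have h2 : (if 0 ≤ b then (-1:ℝ) else 1) ^ 2 * Q j j ≤ 0 := by
    have := hdiag j
    split <;> nlinarith
  linarith

private lemma reduce13 (n : ℕ) (Q : Matrix (Fin n) (Fin n) ℝ)
    (hdiag : ∀ i, Q i i ≤ 0) (c : Fin n → ℝ) :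
    ∀ (m : ℕ) (x : Fin n → ℝ), (Finset.univ.filter (fun i => x i = 0)).card = m →
      (∀ i, x i = 0 ∨ x i = -1 ∨ x i = 1) →
      ∃ y : Fin n → ℝ, (∀ i, y i = -1 ∨ y i = 1) ∧
        y ⬝ᵥ Q *ᵥ y + c ⬝ᵥ y ≤ x ⬝ᵥ Q *ᵥ x + c ⬝ᵥ x := by
  intro m
  induction m with
  | zero =>
    intro x hcard hx
    refine ⟨x, fun i => ?_, le_refl _⟩
    rcases hx i with h | h | h
    · exfalso
      have : i ∈ Finset.univ.filter (fun i => x i = 0) := by simp [h]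
      rw [Finset.card_eq_zero] at hcard
      simp [hcard] at this
    · exact Or.inl h
    · exact Or.inr h
  | succ m ih =>
    intro x hcard hx
    obtain ⟨j, hj⟩ : ∃ j, x j = 0 := by
      have : (Finset.univ.filter (fun i => x i = 0)).Nonempty := by
        rw [← Finset.card_pos, hcard]; omega
      obtain ⟨j, hj⟩ := this
      exact ⟨j, (Finset.mem_filter.mp hj).2⟩
    obtain ⟨t, ht, hle⟩ := step13 n Q hdiag c x j hj
    have htne : t ≠ 0 := by rcases ht with h | h <;> simp [h]
    have hcard' : (Finset.univ.filter (fun i => Function.update x j t i = 0)).card = m := by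
      have : Finset.univ.filter (fun i => Function.update x j t i = 0)
          = (Finset.univ.filter (fun i => x i = 0)).erase j := by
        ext i
        by_cases h : i = j
        · subst h; simp [Function.update_self, htne]
        · simp [Function.update_of_ne h, h]
      rw [this, Finset.card_erase_of_mem (by simp [hj]), hcard]
      omega
    have hx' : ∀ i, Function.update x j t i = 0 ∨ Function.update x j t i = -1 ∨
        Function.update x j t i = 1 := by
      intro i
      by_cases h : i = j
      · subst h; rw [Function.update_self]; tauto
      · rw [Function.update_of_ne h]; exact hx i
    obtain ⟨y, hy, hy2⟩ := ih (Function.update x j t) hcard' hx'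
    exact ⟨y, hy, le_trans hy2 hle⟩

theorem stmt_13 (n : ℕ) (Q : Matrix (Fin n) (Fin n) ℝ) (hQsymm : Q.IsSymm)
    (hdiag : ∀ i, Q i i ≤ 0) (c : Fin n → ℝ) :
    sInf {v : ℝ | ∃ x : Fin n → ℝ, (∀ i, x i = 0 ∨ x i = -1 ∨ x i = 1) ∧
        v = x ⬝ᵥ Q *ᵥ x + c ⬝ᵥ x}
    = sInf {v : ℝ | ∃ x : Fin n → ℝ, (∀ i, x i = -1 ∨ x i = 1) ∧
        v = x ⬝ᵥ Q *ᵥ x + c ⬝ᵥ x} := by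
  set S₁ := {v : ℝ | ∃ x : Fin n → ℝ, (∀ i, x i = 0 ∨ x i = -1 ∨ x i = 1) ∧
      v = x ⬝ᵥ Q *ᵥ x + c ⬝ᵥ x} with hS₁
  set S₂ := {v : ℝ | ∃ x : Fin n → ℝ, (∀ i, x i = -1 ∨ x i = 1) ∧
      v = x ⬝ᵥ Q *ᵥ x + c ⬝ᵥ x} with hS₂
  have hsub : S₂ ⊆ S₁ := by
    rintro v ⟨x, hx, rfl⟩
    exact ⟨x, fun i => Or.inr (hx i), rfl⟩
  have hfin : S₁.Finite := by
    have : S₁ ⊆ (fun x : Fin n → ℝ => x ⬝ᵥ Q *ᵥ x + c ⬝ᵥ x) ''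
        (Set.pi Set.univ fun _ => ({0, -1, 1} : Set ℝ)) := by
      rintro v ⟨x, hx, rfl⟩
      exact ⟨x, fun i _ => by rcases hx i with h | h | h <;> simp [h], rfl⟩
    exact Set.Finite.subset (Set.Finite.image _ (Set.Finite.pi fun _ => by
      exact (Set.finite_singleton _).insert _ |>.insert _)) this
  have hbdd₁ : BddBelow S₁ := hfin.bddBelow
  have hbdd₂ : BddBelow S₂ := hbdd₁.mono hsub
  have hne₂ : S₂.Nonempty :=
    ⟨_, ⟨fun _ => 1, fun _ => Or.inr rfl, rfl⟩⟩
  have hne₁ : S₁.Nonempty := hne₂.mono hsub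
  apply le_antisymm
  · exact csInf_le_csInf hbdd₁ hne₂ hsub
  · apply le_csInf hne₁
    rintro v ⟨x, hx, rfl⟩
    obtain ⟨y, hy, hle⟩ := reduce13 n Q hdiag c _ x rfl hx
    exact le_trans (csInf_le hbdd₂ ⟨y, hy, rfl⟩) hle
end

section
/- Let v ∈ ℤⁿ, x ∈ {0, −1, 1}ⁿ, and j ∈ {1, …, n}. Then (vᵀx)·(vᵀx + x_j) ≥ 0. Consequently, with the vector v extended to an (n+1)-vector by a zero in position 0, the non-standard split inequalities ⟨v(v + e_j)ᵀ, Y⟩ ≥ 0 hold at every rank-one point Y = (1, xᵀ)ᵀ(1, xᵀ) with x ∈ {0, −1, 1}ⁿ. -/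
open Matrix

lemma int_key (m : ℤ) (t : ℝ) (h1 : -1 ≤ t) (h2 : t ≤ 1) :
    0 ≤ (m : ℝ) * ((m : ℝ) + t) := by
  rcases lt_trichotomy m 0 with h | h | h
  · have hm' : m ≤ -1 := by omega
    have hm : (m : ℝ) ≤ -1 := by exact_mod_cast hm'
    nlinarith
  · simp [h]
  · have hm' : (1 : ℤ) ≤ m := h
    have hm : (1 : ℝ) ≤ (m : ℝ) := by exact_mod_cast hm'
    nlinarith

theorem stmt_18 (n : ℕ) (v : Fin n → ℤ) (x : Fin n → ℝ)
    (hx : ∀ i, x i = 0 ∨ x i = -1 ∨ x i = 1) (j : Fin n)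
    (y v' ej : Fin 1 ⊕ Fin n → ℝ)
    (hy : y = Sum.elim (fun _ => 1) x)
    (hv' : v' = Sum.elim (fun _ => 0) (fun i => (v i : ℝ)))
    (hej : ej = fun k => if k = Sum.inr j then 1 else 0) :
    0 ≤ (∑ i, (v i : ℝ) * x i) * ((∑ i, (v i : ℝ) * x i) + x j) ∧
    0 ≤ v' ⬝ᵥ (vecMulVec y y) *ᵥ (v' + ej) := by
  have hxz : ∀ i, ∃ z : ℤ, x i = (z : ℝ) := by
    intro i
    rcases hx i with h | h | h
    · exact ⟨0, by simp [h]⟩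
    · exact ⟨-1, by simp [h]⟩
    · exact ⟨1, by simp [h]⟩
  choose xz hxzeq using hxz
  have hs : (∑ i, (v i : ℝ) * x i) = ((∑ i, v i * xz i : ℤ) : ℝ) := by
    push_cast
    exact Finset.sum_congr rfl fun i _ => by rw [hxzeq i]
  have hxj1 : -1 ≤ x j := by rcases hx j with h | h | h <;> simp [h]
  have hxj2 : x j ≤ 1 := by rcases hx j with h | h | h <;> simp [h]
  have key : 0 ≤ (∑ i, (v i : ℝ) * x i) * ((∑ i, (v i : ℝ) * x i) + x j) := by
    rw [hs]; exact int_key _ _ hxj1 hxj2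
  refine ⟨key, ?_⟩
  have heq : v' ⬝ᵥ (vecMulVec y y) *ᵥ (v' + ej) =
      (∑ i, (v i : ℝ) * x i) * ((∑ i, (v i : ℝ) * x i) + x j) := by
    subst hy hv' hej
    simp [vecMulVec, mulVec, dotProduct, Fintype.sum_sum_type, Finset.mul_sum,
      Finset.sum_mul, mul_add, add_mul, Finset.sum_add_distrib, mul_ite,
      Finset.sum_ite_eq', mul_comm, mul_left_comm]
  rw [heq]; exact key
end
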